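/- (Comparison of face concentrations, Sedan scheme.) Fix M > 0. There exists a constant G > 0, depending only on M, such that for all c_K, c_L ∈ (0,1) with h(c_K) + Φ_K ≠ h(c_L) + Φ_L and all Φ_K, Φ_L ∈ [-M, M], one has C̃(c_K, c_L) / C(c_K, c_L, Φ_K, Φ_L) ≤ G, where C̃(c_K, c_L) = (r(c_K) - r(c_L))/(h(c_K) - h(c_L)) for c_K ≠ c_L and C̃(c, c) = c, and where C(c_K, c_L, Φ_K, Φ_L) = F(c_K, c_L, Φ_K, Φ_L)/(h(c_K) + Φ_K - h(c_L) - Φ_L) is the face concentration of the Sedan flux F(c_K, c_L, Φ_K, Φ_L) = B((Φ_L + ν(c_L)) - (Φ_K + ν(c_K)))·c_K - B((Φ_K + ν(c_K)) - (Φ_L + ν(c_L)))·c_L. -/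

import Mathlib

/-- The Bernoulli function `B(u) = u / (exp u - 1)` for `u ≠ 0`, extended by `B 0 = 1`. -/
noncomputable def bernoulliB (u : ℝ) : ℝ := if u = 0 then 1 else u / (Real.exp u - 1)

/-- The chemical potential `h(c) = log (c / (1-c))`. -/
noncomputable def hF (c : ℝ) : ℝ := Real.log (c / (1 - c))

/-- The excess chemical potential `ν(c) = -log(1-c)`. -/
noncomputable def nuF (c : ℝ) : ℝ := - Real.log (1 - c)

/-- The diffusion enhancement `r(c) = -log(1-c)`. -/
noncomputable def rF (c : ℝ) : ℝ := - Real.log (1 - c)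

/-- The mean face concentration `C̃`. -/
noncomputable def Ctilde (cK cL : ℝ) : ℝ :=
  if cK = cL then cK else (rF cK - rF cL) / (hF cK - hF cL)

/-- The Sedan numerical flux. -/
noncomputable def Fsedan (cK cL ΦK ΦL : ℝ) : ℝ :=
  bernoulliB ((ΦL + nuF cL) - (ΦK + nuF cK)) * cK
    - bernoulliB ((ΦK + nuF cK) - (ΦL + nuF cL)) * cL

/-- The face concentration of the Sedan flux. -/
noncomputable def Csedan (cK cL ΦK ΦL : ℝ) : ℝ :=
  Fsedan cK cL ΦK ΦL / (hF cK + ΦK - hF cL - ΦL)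

lemma exp_mul_exp_neg (x : ℝ) : Real.exp x * Real.exp (-x) = 1 := by
  rw [← Real.exp_add]; simp

lemma bernoulliB_pos (x : ℝ) : 0 < bernoulliB x := by
  unfold bernoulliB
  rcases lt_trichotomy x 0 with h | h | h
  · rw [if_neg h.ne]
    apply div_pos_of_neg_of_neg h
    simp only [sub_neg]
    exact Real.exp_lt_one_iff.mpr h
  · simp [h]
  · rw [if_neg h.ne']
    apply div_pos h
    simp only [sub_pos]
    exact Real.one_lt_exp_iff.mpr h

lemma neg_le_bernoulliB (x : ℝ) : -x ≤ bernoulliB x := by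
  rcases le_or_gt x 0 with h | h
  · rcases eq_or_lt_of_le h with rfl | h
    · simpa using (bernoulliB_pos 0).le
    · unfold bernoulliB
      rw [if_neg h.ne]
      have he : Real.exp x - 1 < 0 := by
        simp only [sub_neg]; exact Real.exp_lt_one_iff.mpr h
      rw [le_div_iff_of_neg he]
      nlinarith [Real.exp_pos x]
  · linarith [bernoulliB_pos x]

/-- B(-x) ≤ 1 + t whenever x ≤ t, 0 ≤ t -/
lemma bernoulliB_neg_le (x t : ℝ) (ht : 0 ≤ t) (h : x ≤ t) : bernoulliB (-x) ≤ 1 + t := by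
  rcases le_or_gt x 0 with h0 | h0
  · have : bernoulliB (-x) ≤ 1 := by
      rcases eq_or_lt_of_le h0 with rfl | h0
      · simp [bernoulliB]
      · unfold bernoulliB
        rw [if_neg (by linarith : -x ≠ 0)]
        rw [div_le_one (by simp only [sub_pos]; exact Real.one_lt_exp_iff.mpr (by linarith))]
        nlinarith [Real.add_one_le_exp (-x)]
    linarith
  · have : bernoulliB (-x) ≤ 1 + x := by
      unfold bernoulliB
      rw [if_neg (by linarith : -x ≠ 0)]
      have he : Real.exp (-x) - 1 < 0 := by
        simp only [sub_neg]; exact Real.exp_lt_one_iff.mpr (by linarith)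
      rw [div_le_iff_of_neg he]
      nlinarith [mul_le_mul_of_nonneg_right (Real.add_one_le_exp x) (Real.exp_pos (-x)).le,
        exp_mul_exp_neg x]
    linarith

/-- exp(-t) ≤ B(x) whenever x ≤ t, 0 ≤ t -/
lemma exp_neg_le_bernoulliB (x t : ℝ) (ht : 0 ≤ t) (h : x ≤ t) : Real.exp (-t) ≤ bernoulliB x := by
  rcases le_or_gt x 0 with h0 | h0
  · have h1 : (1:ℝ) ≤ bernoulliB x := by
      rcases eq_or_lt_of_le h0 with rfl | h0
      · simp [bernoulliB]
      · unfold bernoulliB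
        rw [if_neg h0.ne]
        have he : Real.exp x - 1 < 0 := by
          simp only [sub_neg]; exact Real.exp_lt_one_iff.mpr h0
        rw [le_div_iff_of_neg he]
        nlinarith [Real.add_one_le_exp x]
    calc Real.exp (-t) ≤ 1 := Real.exp_le_one_iff.mpr (by linarith)
    _ ≤ _ := h1
  · have h1 : Real.exp (-x) ≤ bernoulliB x := by
      unfold bernoulliB
      rw [if_neg h0.ne']
      rw [le_div_iff₀ (by simp only [sub_pos]; exact Real.one_lt_exp_iff.mpr h0)]
      nlinarith [Real.add_one_le_exp (-x), exp_mul_exp_neg x]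
    calc Real.exp (-t) ≤ Real.exp (-x) := Real.exp_le_exp.mpr (by linarith)
    _ ≤ _ := h1

lemma bernoulliB_neg_eq (u : ℝ) : bernoulliB (-u) = Real.exp u * bernoulliB u := by
  rcases eq_or_ne u 0 with rfl | h
  · simp [bernoulliB]
  · unfold bernoulliB
    rw [if_neg (neg_ne_zero.mpr h), if_neg h]
    have h1 : Real.exp u - 1 ≠ 0 := sub_ne_zero.mpr (fun he => h ((Real.exp_eq_one_iff u).mp he))
    have h1' : 1 - Real.exp u ≠ 0 := fun he => h1 (by linarith [sub_eq_zero.mp he])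
    have h2 : Real.exp (-u) - 1 ≠ 0 := sub_ne_zero.mpr (fun he => h (by simpa using (Real.exp_eq_one_iff (-u)).mp he))
    rw [Real.exp_neg] at h2 ⊢
    have he : Real.exp u ≠ 0 := (Real.exp_pos u).ne'
    field_simp
    ring

/-- Shared lower bound: `10M+5 ≤ G·b1` when `E⁻¹ ≤ b1`, `E = exp(2M)`-ish. -/
lemma hGb_aux (M E b1 : ℝ) (hM : 0 < M) (hE1 : 1 ≤ E) (hEE : E * E⁻¹ = 1)
    (hb1pos : 0 < b1) (hb1low : E⁻¹ ≤ b1) :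
    10*M+5 ≤ ((10*M+5)*E+4) * b1 := by
  have h1 : (10*M+5)*E*E⁻¹ ≤ (10*M+5)*E*b1 := by
    apply mul_le_mul_of_nonneg_left hb1low
    positivity
  rw [mul_assoc, hEE, mul_one] at h1
  nlinarith [hb1pos]

/-- Arithmetic core, equal-concentrations case. -/
lemma arith_eq (M E cK b1 b2 : ℝ) (hM : 0 < M) (hE1 : 1 ≤ E) (hEE : E * E⁻¹ = 1)
    (hK0 : 0 < cK) (hb1pos : 0 < b1) (hb1low : E⁻¹ ≤ b1)
    (hb2pos : 0 < b2) (hb2up : b2 ≤ 1 + 2*M) :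
    cK * b2 ≤ ((10*M+5)*E+4) * (cK * b1) := by
  have hGb := hGb_aux M E b1 hM hE1 hEE hb1pos hb1low
  have h2 : cK * b2 ≤ cK * (1+2*M) := mul_le_mul_of_nonneg_left hb2up hK0.le
  have h3 : cK * (10*M+5) ≤ cK * (((10*M+5)*E+4) * b1) := mul_le_mul_of_nonneg_left hGb hK0.le
  nlinarith [mul_pos hK0 hM]

/-- Arithmetic core, distinct-concentrations case. -/
lemma arith_lt (M E N Lg cK cL b1 b2 : ℝ)
    (hM : 0 < M) (hE1 : 1 ≤ E) (hEE : E * E⁻¹ = 1)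
    (hK0 : 0 < cK) (hK1 : cK < 1) (hL0 : 0 < cL)
    (hN0 : 0 ≤ N) (hLg0 : 0 ≤ Lg) (hDpos : 0 < N + Lg)
    (hA2 : (1-cK)*N ≤ cK - cL) (hNCD : N ≤ cK*(N+Lg))
    (hb1pos : 0 < b1) (hb1low : E⁻¹ ≤ b1) (hb1u : N - 2*M ≤ b1)
    (hb2pos : 0 < b2) (hb2up : b2 ≤ 1 + (2*M + (N+Lg))) :
    (N / (N + Lg)) * b2 ≤ ((10*M+5)*E+4) * (cK * b1) := by
  rw [div_mul_eq_mul_div, div_le_iff₀ hDpos]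
  have hGb := hGb_aux M E b1 hM hE1 hEE hb1pos hb1low
  have k1 : N * b2 ≤ N * (1 + 2*M) + N * (N + Lg) := by
    have := mul_le_mul_of_nonneg_left hb2up hN0
    nlinarith [this]
  have k2 : N * (1+2*M) ≤ cK*(N+Lg)*(1+2*M) := by
    have := mul_le_mul_of_nonneg_right hNCD (by linarith : (0:ℝ) ≤ 1+2*M)
    linarith
  have k5 : cK*(N+Lg)*(10*M+5) ≤ cK*(N+Lg) * (((10*M+5)*E+4) * b1) :=
    mul_le_mul_of_nonneg_left hGb (by positivity)
  rcases le_or_gt cK (1/2) with hc | hc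
  · have hN2c : N ≤ 2*cK := by nlinarith [hA2, hN0, hL0]
    have k3 : N * (N + Lg) ≤ 2*cK*(N+Lg) := by
      have := mul_le_mul_of_nonneg_right hN2c hDpos.le
      linarith
    have slack : (0:ℝ) ≤ (8*M+2) * (cK*(N+Lg)) :=
      mul_nonneg (by linarith) (mul_pos hK0 hDpos).le
    linarith [k1, k2, k3, k5, slack]
  · rcases le_or_gt N (4*M+2) with hN4 | hN4
    · have hN8c : N ≤ (8*M+4)*cK := by
        have : (0:ℝ) ≤ (8*M+4)*(cK - 1/2) := mul_nonneg (by linarith) (by linarith)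
        nlinarith [this]
      have k3 : N * (N + Lg) ≤ (8*M+4)*cK*(N+Lg) := by
        have := mul_le_mul_of_nonneg_right hN8c hDpos.le
        linarith
      linarith [k1, k2, k3, k5]
    · have hbig : N/2 + 1 ≤ b1 := by linarith
      have hG9 : 10*M+9 ≤ (10*M+5)*E+4 := by nlinarith [hE1, hM]
      have hx : (0:ℝ) ≤ (1/2)*(N/2+1) := by nlinarith [hN0]
      have hcb : (1/2)*(N/2+1) ≤ cK*b1 :=
        mul_le_mul hc.le hbig (by linarith) hK0.le
      have k4 : (1+2*M) + N ≤ ((10*M+5)*E+4) * (cK * b1) := by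
        have t1 : ((10*M+5)*E+4) * ((1/2)*(N/2+1)) ≤ ((10*M+5)*E+4) * (cK*b1) :=
          mul_le_mul_of_nonneg_left hcb (by positivity)
        have t2 : (10*M+9) * ((1/2)*(N/2+1)) ≤ ((10*M+5)*E+4) * ((1/2)*(N/2+1)) :=
          mul_le_mul_of_nonneg_right hG9 hx
        have t3 : (1+2*M) + N ≤ (10*M+9) * ((1/2)*(N/2+1)) := by
          linarith [mul_nonneg hM.le hN0, hN0, hM]
        linarith
      have k6 : N*(1+2*M) + N*(N+Lg) ≤ ((1+2*M)+N)*(N+Lg) := by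
        linarith [mul_nonneg hM.le hLg0, hLg0]
      have k7 : ((1+2*M)+N)*(N+Lg) ≤ (((10*M+5)*E+4) * (cK*b1))*(N+Lg) :=
        mul_le_mul_of_nonneg_right k4 hDpos.le
      linarith [k1, k6, k7]

lemma hF_eq (c : ℝ) (h0 : 0 < c) (h1 : c < 1) : hF c = Real.log c + nuF c := by
  unfold hF nuF
  rw [Real.log_div h0.ne' (by linarith)]
  ring

lemma Ctilde_comm (cK cL : ℝ) : Ctilde cK cL = Ctilde cL cK := by
  unfold Ctilde
  rcases eq_or_ne cK cL with rfl | h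
  · simp
  · rw [if_neg h, if_neg (Ne.symm h),
      show rF cL - rF cK = -(rF cK - rF cL) by ring,
      show hF cL - hF cK = -(hF cK - hF cL) by ring, neg_div_neg_eq]

lemma Csedan_comm (cK cL ΦK ΦL : ℝ) : Csedan cK cL ΦK ΦL = Csedan cL cK ΦL ΦK := by
  unfold Csedan
  rw [show Fsedan cL cK ΦL ΦK = -(Fsedan cK cL ΦK ΦL) by unfold Fsedan; ring,
    show hF cL + ΦL - hF cK - ΦK = -(hF cK + ΦK - hF cL - ΦL) by ring, neg_div_neg_eq]

lemma Csedan_eq (cK cL ΦK ΦL : ℝ) (hK0 : 0 < cK) (hK1 : cK < 1) (hL0 : 0 < cL) (hL1 : cL < 1)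
    (hδ : hF cK + ΦK - hF cL - ΦL ≠ 0) :
    Csedan cK cL ΦK ΦL =
      cK * bernoulliB (-((ΦK + nuF cK) - (ΦL + nuF cL)))
        / bernoulliB (-(hF cK + ΦK - hF cL - ΦL)) := by
  set u := (ΦK + nuF cK) - (ΦL + nuF cL) with hu
  set δ := hF cK + ΦK - hF cL - ΦL with hδdef
  have hdu : δ - u = Real.log cK - Real.log cL := by
    rw [hδdef, hu, hF_eq cK hK0 hK1, hF_eq cL hL0 hL1]; ring
  have hexp : Real.exp (δ - u) = cK / cL := by
    rw [hdu, Real.exp_sub, Real.exp_log hK0, Real.exp_log hL0]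
  have hexpu : Real.exp (-u) * cL = Real.exp (-δ) * cK := by
    have : Real.exp (-u) = Real.exp (δ - u) * Real.exp (-δ) := by
      rw [← Real.exp_add]; ring_nf
    rw [this, hexp]
    field_simp
  have hkey : Fsedan cK cL ΦK ΦL = bernoulliB (-u) * cK * (1 - Real.exp (-δ)) := by
    unfold Fsedan
    rw [show (ΦL + nuF cL) - (ΦK + nuF cK) = -u by rw [hu]; ring]
    have hBu : bernoulliB u = Real.exp (-u) * bernoulliB (-u) := by
      rw [bernoulliB_neg_eq u]
      rw [← mul_assoc, ← Real.exp_add]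
      simp
    rw [hBu]
    have : Real.exp (-u) * bernoulliB (-u) * cL = bernoulliB (-u) * (Real.exp (-δ) * cK) := by
      rw [← hexpu]; ring
    rw [this]; ring
  unfold Csedan
  rw [hkey]
  have hBδ : bernoulliB (-δ) = -δ / (Real.exp (-δ) - 1) := by
    unfold bernoulliB
    rw [if_neg (neg_ne_zero.mpr hδ)]
  rw [show hF cK + ΦK - hF cL - ΦL = δ from hδdef.symm]
  rw [hBδ, div_div_eq_mul_div]
  rw [div_eq_div_iff hδ (neg_ne_zero.mpr hδ)]
  ring

lemma main_bound (M : ℝ) (hM : 0 < M) (cK cL ΦK ΦL : ℝ)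
    (hK : cK ∈ Set.Ioo (0:ℝ) 1) (hL : cL ∈ Set.Ioo (0:ℝ) 1)
    (hΦK : ΦK ∈ Set.Icc (-M) M) (hΦL : ΦL ∈ Set.Icc (-M) M)
    (hle : cL ≤ cK) (hne : hF cK + ΦK ≠ hF cL + ΦL) :
    Ctilde cK cL / Csedan cK cL ΦK ΦL ≤ (10*M+5)*Real.exp (2*M) + 4 := by
  obtain ⟨hK0, hK1⟩ := hK
  obtain ⟨hL0, hL1⟩ := hL
  obtain ⟨hΦK1, hΦK2⟩ := hΦK
  obtain ⟨hΦL1, hΦL2⟩ := hΦL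
  have hδne : hF cK + ΦK - hF cL - ΦL ≠ 0 := fun h => hne (by linarith)
  rw [Csedan_eq cK cL ΦK ΦL hK0 hK1 hL0 hL1 hδne]
  have hEpos : 0 < Real.exp (2*M) := Real.exp_pos _
  have hE1 : 1 ≤ Real.exp (2*M) := Real.one_le_exp (by linarith)
  have hEE : Real.exp (2*M) * (Real.exp (2*M))⁻¹ = 1 := mul_inv_cancel₀ hEpos.ne'
  have hb1pos : 0 < bernoulliB (-((ΦK + nuF cK) - (ΦL + nuF cL))) := bernoulliB_pos _
  have hb2pos : 0 < bernoulliB (-(hF cK + ΦK - hF cL - ΦL)) := bernoulliB_pos _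
  have hnu : nuF cL ≤ nuF cK := by
    have := Real.log_le_log (by linarith : (0:ℝ) < 1 - cK) (by linarith : 1 - cK ≤ 1 - cL)
    unfold nuF; linarith
  have hlogle : Real.log cL ≤ Real.log cK := Real.log_le_log hL0 hle
  have hN0 : 0 ≤ nuF cK - nuF cL := by linarith
  have hLg0 : 0 ≤ Real.log cK - Real.log cL := by linarith
  have hA2 : (1-cK)*(nuF cK - nuF cL) ≤ cK - cL := by
    have t1 : Real.log ((1-cL)/(1-cK)) ≤ (1-cL)/(1-cK) - 1 :=
      Real.log_le_sub_one_of_pos (div_pos (by linarith) (by linarith))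
    rw [Real.log_div (by linarith : (1:ℝ)-cL ≠ 0) (by linarith : (1:ℝ)-cK ≠ 0)] at t1
    have hcne : (1:ℝ) - cK ≠ 0 := by linarith
    have t2 : (1-cK) * ((1-cL)/(1-cK) - 1) = cK - cL := by
      field_simp
      ring
    have t3 := mul_le_mul_of_nonneg_left t1 (by linarith : (0:ℝ) ≤ 1-cK)
    rw [t2] at t3
    have t4 : (1-cK)*(nuF cK - nuF cL) = (1-cK) * (Real.log (1-cL) - Real.log (1-cK)) := by
      unfold nuF; ring
    rw [t4]; exact t3
  have hA3 : cK - cL ≤ cK * (Real.log cK - Real.log cL) := by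
    have t1 : Real.log (cL/cK) ≤ cL/cK - 1 :=
      Real.log_le_sub_one_of_pos (div_pos hL0 hK0)
    rw [Real.log_div hL0.ne' hK0.ne'] at t1
    have hcne2 : cK ≠ 0 := hK0.ne'
    have t2 : cK * (cL/cK - 1) = cL - cK := by field_simp
    have t3 := mul_le_mul_of_nonneg_left t1 hK0.le
    rw [t2] at t3
    nlinarith [t3]
  have hNCD : nuF cK - nuF cL ≤ cK * ((nuF cK - nuF cL) + (Real.log cK - Real.log cL)) := by
    nlinarith [hA2, hA3]
  have hu2M : -((ΦK + nuF cK) - (ΦL + nuF cL)) ≤ 2*M := by linarith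
  have hb1low : (Real.exp (2*M))⁻¹ ≤ bernoulliB (-((ΦK + nuF cK) - (ΦL + nuF cL))) := by
    have := exp_neg_le_bernoulliB (-((ΦK + nuF cK) - (ΦL + nuF cL))) (2*M) (by linarith) hu2M
    rwa [Real.exp_neg] at this
  have hb1u : (nuF cK - nuF cL) - 2*M ≤ bernoulliB (-((ΦK + nuF cK) - (ΦL + nuF cL))) := by
    have h1 := neg_le_bernoulliB (-((ΦK + nuF cK) - (ΦL + nuF cL)))
    rw [neg_neg] at h1
    linarith
  have hD : hF cK - hF cL = (nuF cK - nuF cL) + (Real.log cK - Real.log cL) := by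
    rw [hF_eq cK hK0 hK1, hF_eq cL hL0 hL1]; ring
  have hδle : hF cK + ΦK - hF cL - ΦL
      ≤ 2*M + ((nuF cK - nuF cL) + (Real.log cK - Real.log cL)) := by
    have : hF cK + ΦK - hF cL - ΦL = (hF cK - hF cL) + (ΦK - ΦL) := by ring
    rw [this, hD]; linarith
  have hb2up : bernoulliB (-(hF cK + ΦK - hF cL - ΦL))
      ≤ 1 + (2*M + ((nuF cK - nuF cL) + (Real.log cK - Real.log cL))) :=
    bernoulliB_neg_le _ _ (by linarith) hδle
  rw [div_div_eq_mul_div, div_le_iff₀ (mul_pos hK0 hb1pos)]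
  rcases eq_or_lt_of_le hle with heq | hlt
  · -- cL = cK
    have hC : Ctilde cK cL = cK := by rw [Ctilde, if_pos heq.symm]
    rw [hC]
    have hNeq : nuF cK - nuF cL = 0 := by rw [heq]; ring
    have hLgeq : Real.log cK - Real.log cL = 0 := by rw [heq]; ring
    have hb2' : bernoulliB (-(hF cK + ΦK - hF cL - ΦL)) ≤ 1 + 2*M := by
      rw [hNeq, hLgeq] at hb2up; linarith
    exact arith_eq M (Real.exp (2*M)) cK _ _ hM hE1 hEE hK0 hb1pos hb1low hb2pos hb2'
  · -- cL < cK
    have hLgpos : 0 < Real.log cK - Real.log cL := by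
      have := Real.log_lt_log hL0 hlt
      linarith
    have hDpos : 0 < (nuF cK - nuF cL) + (Real.log cK - Real.log cL) := by linarith
    have hC : Ctilde cK cL
        = (nuF cK - nuF cL) / ((nuF cK - nuF cL) + (Real.log cK - Real.log cL)) := by
      rw [Ctilde, if_neg (ne_of_gt hlt), hD]
      congr 1
    rw [hC]
    exact arith_lt M (Real.exp (2*M)) (nuF cK - nuF cL) (Real.log cK - Real.log cL)
      cK cL _ _ hM hE1 hEE hK0 hK1 hL0 hN0 hLg0 hDpos hA2 hNCD
      hb1pos hb1low hb1u hb2pos hb2up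

theorem sedan_face_concentration_comparison (M : ℝ) (hM : 0 < M) :
    ∃ G : ℝ, 0 < G ∧
      ∀ cK ∈ Set.Ioo (0 : ℝ) 1, ∀ cL ∈ Set.Ioo (0 : ℝ) 1,
        ∀ ΦK ∈ Set.Icc (-M) M, ∀ ΦL ∈ Set.Icc (-M) M,
          hF cK + ΦK ≠ hF cL + ΦL →
            Ctilde cK cL / Csedan cK cL ΦK ΦL ≤ G := by
  refine ⟨(10*M+5)*Real.exp (2*M) + 4, by positivity, ?_⟩
  intro cK hK cL hL ΦK hΦK ΦL hΦL hne
  rcases le_total cL cK with hle | hle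
  · exact main_bound M hM cK cL ΦK ΦL hK hL hΦK hΦL hle hne
  · rw [Ctilde_comm, Csedan_comm]
    exact main_bound M hM cL cK ΦL ΦK hL hK hΦL hΦK hle (Ne.symm hne)
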